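/- arXiv:1903.01830 — 6 statements merged into one kernel-verified Lean document; each statement's English description precedes it below -/
import Mathlib

section
/- Suppose a sequence of nonnegative numbers $(\widetilde\eta_\ell)_{\ell\in\mathbb{N}_0}$ and a sequence of nonnegative perturbations $(\varrho_\ell)_{\ell\in\mathbb{N}_0}$ satisfy: (i) estimator reduction $\widetilde\eta_{\ell+1}^2 \le q\,\widetilde\eta_\ell^2 + C\,\varrho_\ell^2$ for some $0<q<1$, $C>0$; and (ii) general quasi-orthogonality $\sum_{k=\ell}^{\ell+N}(\varrho_k^2 - \varepsilon\,\widetilde\eta_k^2) \le C_{\rm qo}\,\widetilde\eta_\ell^2$ for all $\ell,N\in\mathbb{N}_0$, where $0 \le \varepsilon < (1-q)/C$. Then the sequence converges linearly: there exist $C_{\rm conv}>0$ and $0<q_{\rm conv}<1$ such that $\widetilde\eta_{\ell+k} \le C_{\rm conv}\, q_{\rm conv}^k\, \widetilde\eta_\ell$ for all $k,\ell\in\mathbb{N}_0$. -/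
/-!
With `aₙ = ηₙ²`, summing the estimator reduction over `ℓ, …, ℓ + N` and inserting the
quasi-orthogonality bounds the partial sums `∑_{k=ℓ}^{ℓ+N} a_k` by `(q + Cε)` times themselves
plus a multiple of `a_ℓ`; since `q + Cε < 1` this gives uniform summability
`∑_{k=ℓ}^{ℓ+N} a_k ≤ M a_ℓ`. Uniform summability in turn forces linear convergence: each tail
`t_n = ∑_{k ≥ n} a_k` satisfies `t_n ≤ M a_n = M (t_n - t_{n+1})`, i.e. `t_{n+1} ≤ (1 - 1/M) t_n`.
-/

open Finset

theorem sum_Icc_add_eq_add_sum_Icc_succ (a : ℕ → ℝ) (ℓ N : ℕ) :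
    ∑ k ∈ Icc ℓ (ℓ + N), a k + a (ℓ + N + 1) = a ℓ + ∑ k ∈ Icc ℓ (ℓ + N), a (k + 1) := by
  induction N with
  | zero => simp
  | succ N ih =>
    rw [← add_assoc ℓ N 1, sum_Icc_succ_top (by omega), sum_Icc_succ_top (by omega)]
    linarith

theorem sum_Icc_le_of_reduction_of_quasiOrthogonality {a r : ℕ → ℝ} {q C ε Cqo : ℝ}
    (ha : ∀ n, 0 ≤ a n) (hC : 0 ≤ C) (hμ : q + C * ε < 1)
    (hred : ∀ n, a (n + 1) ≤ q * a n + C * r n)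
    (hqo : ∀ ℓ N, ∑ k ∈ Icc ℓ (ℓ + N), (r k - ε * a k) ≤ Cqo * a ℓ) (ℓ N : ℕ) :
    ∑ k ∈ Icc ℓ (ℓ + N), a k ≤ (1 + C * Cqo) / (1 - (q + C * ε)) * a ℓ := by
  set T := ∑ k ∈ Icc ℓ (ℓ + N), a k
  have hshift : ∑ k ∈ Icc ℓ (ℓ + N), a (k + 1) ≤ q * T + C * ∑ k ∈ Icc ℓ (ℓ + N), r k := by
    rw [mul_sum, mul_sum, ← sum_add_distrib]
    exact sum_le_sum fun k _ => hred k
  have hr : ∑ k ∈ Icc ℓ (ℓ + N), r k ≤ ε * T + Cqo * a ℓ := by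
    have := hqo ℓ N
    rw [sum_sub_distrib, ← mul_sum] at this
    linarith
  have hT : T ≤ a ℓ + ∑ k ∈ Icc ℓ (ℓ + N), a (k + 1) := by
    linarith [sum_Icc_add_eq_add_sum_Icc_succ a ℓ N, ha (ℓ + N + 1)]
  rw [div_mul_eq_mul_div, le_div_iff₀ (by linarith)]
  nlinarith [mul_le_mul_of_nonneg_left hr hC]

theorem le_mul_pow_mul_of_sum_Icc_le {a : ℕ → ℝ} {M : ℝ} (hM : 1 ≤ M)
    (hsum : ∀ ℓ N, ∑ k ∈ Icc ℓ (ℓ + N), a k ≤ M * a ℓ) (ℓ k : ℕ) :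
    a (ℓ + k) ≤ M * (1 - M⁻¹) ^ k * a ℓ := by
  -- tails truncated at `ℓ + k`, so that no summability is needed
  set t : ℕ → ℝ := fun n => ∑ i ∈ Icc n (ℓ + k), a i
  have ht_le : ∀ n ≤ ℓ + k, t n ≤ M * a n := fun n hn => by
    simpa [t, Nat.add_sub_cancel' hn] using hsum n (ℓ + k - n)
  have ht_succ : ∀ n ≤ ℓ + k, t (n + 1) ≤ (1 - M⁻¹) * t n := by
    intro n hn
    have hsplit : t n = a n + t (n + 1) := by
      simp only [t]
      rw [Icc_eq_cons_Ioc hn, sum_cons, Icc_add_one_left_eq_Ioc]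
    have : M⁻¹ * t n ≤ a n := by
      rw [inv_mul_le_iff₀ (by linarith)]
      exact ht_le n hn
    linarith
  have hν : 0 ≤ 1 - M⁻¹ := sub_nonneg.mpr (inv_le_one_of_one_le₀ hM)
  calc a (ℓ + k) = t (ℓ + k) := by simp [t]
    _ ≤ (1 - M⁻¹) ^ k * t ℓ :=
      le_geom (u := fun m => t (ℓ + m)) hν k fun m hm => ht_succ (ℓ + m) (by omega)
    _ ≤ (1 - M⁻¹) ^ k * (M * a ℓ) := by gcongr; exact ht_le ℓ (by omega)
    _ = M * (1 - M⁻¹) ^ k * a ℓ := by ring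

theorem linear_convergence_of_estimator_reduction_and_quasi_orthogonality_general
    (η ρ : ℕ → ℝ) (q C ε Cqo : ℝ)
    (hC : 0 < C)
    (hη : ∀ ℓ, 0 ≤ η ℓ)
    (hred : ∀ ℓ, η (ℓ + 1) ^ 2 ≤ q * η ℓ ^ 2 + C * ρ ℓ ^ 2)
    (hε : ε < (1 - q) / C)
    (hqo : ∀ ℓ N : ℕ,
      ∑ k ∈ Finset.Icc ℓ (ℓ + N), (ρ k ^ 2 - ε * η k ^ 2) ≤ Cqo * η ℓ ^ 2) :
    ∃ Cconv > (0 : ℝ), ∃ qconv : ℝ, 0 < qconv ∧ qconv < 1 ∧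
      ∀ k ℓ : ℕ, η (ℓ + k) ≤ Cconv * qconv ^ k * η ℓ := by
  have hμ : q + C * ε < 1 := by
    have := (lt_div_iff₀ hC).mp hε
    linarith
  set M := max ((1 + C * Cqo) / (1 - (q + C * ε))) 2
  have hM : 2 ≤ M := le_max_right _ _
  have hsum : ∀ ℓ N, ∑ k ∈ Icc ℓ (ℓ + N), η k ^ 2 ≤ M * η ℓ ^ 2 := fun ℓ N =>
    (sum_Icc_le_of_reduction_of_quasiOrthogonality (a := fun n => η n ^ 2)
      (r := fun n => ρ n ^ 2) (fun n => sq_nonneg _) hC.le hμ hred hqo ℓ N).trans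
      (by gcongr; exact le_max_left _ _)
  have hν : 0 < 1 - M⁻¹ ∧ 1 - M⁻¹ < 1 := by
    have : 0 < M⁻¹ ∧ M⁻¹ < 1 := ⟨by positivity, inv_lt_one_of_one_lt₀ (by linarith)⟩
    constructor <;> linarith
  refine ⟨√M, by positivity, √(1 - M⁻¹), Real.sqrt_pos.mpr hν.1,
    (Real.sqrt_lt' one_pos).mpr (by linarith), fun k ℓ => le_of_sq_le_sq ?_ (by positivity [hη ℓ])⟩
  rw [mul_pow, mul_pow, Real.sq_sqrt (by linarith), ← pow_mul, mul_comm k 2, pow_mul,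
    Real.sq_sqrt hν.1.le]
  exact le_mul_pow_mul_of_sum_Icc_le (by linarith) hsum ℓ k

/-- Abstract linear convergence: estimator reduction together with general
quasi-orthogonality implies linear convergence of the estimator sequence. -/
theorem linear_convergence_of_estimator_reduction_and_quasi_orthogonality
    (η ρ : ℕ → ℝ) (q C ε Cqo : ℝ)
    (hq0 : 0 < q) (hq1 : q < 1) (hC : 0 < C)
    (hη : ∀ ℓ, 0 ≤ η ℓ) (hρ : ∀ ℓ, 0 ≤ ρ ℓ)
    (hred : ∀ ℓ, η (ℓ + 1) ^ 2 ≤ q * η ℓ ^ 2 + C * ρ ℓ ^ 2)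
    (hε0 : 0 ≤ ε) (hε : ε < (1 - q) / C)
    (hqo : ∀ ℓ N : ℕ,
      ∑ k ∈ Finset.Icc ℓ (ℓ + N), (ρ k ^ 2 - ε * η k ^ 2) ≤ Cqo * η ℓ ^ 2) :
    ∃ Cconv > (0 : ℝ), ∃ qconv : ℝ, 0 < qconv ∧ qconv < 1 ∧
      ∀ k ℓ : ℕ, η (ℓ + k) ≤ Cconv * qconv ^ k * η ℓ :=
  linear_convergence_of_estimator_reduction_and_quasi_orthogonality_general η ρ q C ε Cqo hC hη hred
    hε hqo
end

section
/- Let $a,b,\widetilde\eta_\bullet,\widetilde\eta_\circ,R \ge 0$ and constants $C_{\rm stab}, C_{\rm drel} \ge 1$ be given such that $\widetilde\eta_\bullet^2 = a^2 + b^2$, $a \le R$ (the refined part is contained in $R$), and for every $\delta>0$: $b^2 \le (1+\delta^{-1})\widetilde\eta_\circ^2 + (1+\delta)C_{\rm stab}^2 \varrho^2$ with $\varrho^2 \le C_{\rm drel}^2 R^2$. Then for every $0 < \widetilde\theta < (1 + C_{\rm stab}^2 C_{\rm drel}^2)^{-1}$ there exists $0 < q_{\widetilde\theta} < 1$, depending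 only on $C_{\rm stab}$, $C_{\rm drel}$, and $\widetilde\theta$, such that $\widetilde\eta_\circ^2 \le q_{\widetilde\theta}\, \widetilde\eta_\bullet^2$ implies $\widetilde\theta\, \widetilde\eta_\bullet^2 \le R^2$. -/
/-- Abstract optimality of Dörfler marking: stability on unrefined patches plus
discrete reliability imply that a sufficient estimator reduction forces the
refined-patch contribution `R` to satisfy the Dörfler criterion. -/
theorem doerfler_marking_optimality
    (Cstab Cdrel : ℝ) (hCs : 1 ≤ Cstab) (hCd : 1 ≤ Cdrel)
    (θ : ℝ) (hθ0 : 0 < θ) (hθ1 : θ < (1 + Cstab ^ 2 * Cdrel ^ 2)⁻¹) :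
    ∃ qθ : ℝ, 0 < qθ ∧ qθ < 1 ∧
      ∀ a b ηb ηc R ϱ : ℝ,
        0 ≤ a → 0 ≤ b → 0 ≤ ηb → 0 ≤ ηc → 0 ≤ R → 0 ≤ ϱ →
        ηb ^ 2 = a ^ 2 + b ^ 2 →
        a ≤ R →
        ϱ ^ 2 ≤ Cdrel ^ 2 * R ^ 2 →
        (∀ δ : ℝ, 0 < δ → b ^ 2 ≤ (1 + δ⁻¹) * ηc ^ 2 + (1 + δ) * Cstab ^ 2 * ϱ ^ 2) →
        ηc ^ 2 ≤ qθ * ηb ^ 2 → θ * ηb ^ 2 ≤ R ^ 2 := by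
  set C : ℝ := Cstab ^ 2 * Cdrel ^ 2 with hCdef
  have hCsCd : 1 ≤ Cstab * Cdrel := by nlinarith
  have hC1 : 1 ≤ C := by rw [hCdef]; nlinarith
  have hC0 : 0 < C := by linarith
  have hθC : θ * (1 + C) < 1 := by
    have h1C : (0:ℝ) < 1 + C := by linarith
    calc θ * (1 + C) < (1 + C)⁻¹ * (1 + C) := by
          exact mul_lt_mul_of_pos_right hθ1 h1C
      _ = 1 := inv_mul_cancel₀ (ne_of_gt h1C)
  set ε : ℝ := (1 - θ * (1 + C)) / 2 with hεdef
  have hε0 : 0 < ε := by rw [hεdef]; linarith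
  have hε2 : ε = (1 - θ * (1 + C)) / 2 := hεdef
  set δ : ℝ := (1 - θ * (1 + C)) / (2 * θ * C) with hδdef
  have hδ0 : 0 < δ := by
    rw [hδdef]; apply div_pos (by linarith) (by positivity)
  have hθδC : θ * C * δ = ε := by
    rw [hδdef, hεdef]
    field_simp
  have hδinv0 : 0 < (1:ℝ) + δ⁻¹ := by positivity
  set qθ : ℝ := ε / (1 + δ⁻¹) with hqdef
  have hq0 : 0 < qθ := div_pos hε0 hδinv0
  have hqε : (1 + δ⁻¹) * qθ = ε := by
    rw [hqdef]
    field_simp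
  clear_value C ε δ qθ
  have hq1 : qθ < 1 := by
    rw [hqdef, div_lt_one hδinv0]
    have h1 : (0:ℝ) < δ⁻¹ := inv_pos.mpr hδ0
    have hεlt1 : ε < 1 := by rw [hε2]; nlinarith
    linarith
  refine ⟨qθ, hq0, hq1, ?_⟩
  intro a b ηb ηc R ϱ ha hb hηb hηc hR hϱ hsum haR hϱR hstab hred
  set K : ℝ := 1 + (1 + δ) * C with hKdef
  have hK0 : 0 < K := by rw [hKdef]; positivity
  have hkey : θ * K = 1 - (1 + δ⁻¹) * qθ := by
    rw [hqε, hKdef]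
    have : θ * (1 + (1 + δ) * C) = θ * (1 + C) + θ * C * δ := by ring
    rw [this, hθδC, hε2]
    ring
  clear_value K
  have hb2 := hstab δ hδ0
  have ha2 : a ^ 2 ≤ R ^ 2 := by nlinarith
  have hϱ2 : (1 + δ) * Cstab ^ 2 * ϱ ^ 2 ≤ (1 + δ) * C * R ^ 2 := by
    have h1 : (0:ℝ) ≤ (1 + δ) * Cstab ^ 2 := by positivity
    calc (1 + δ) * Cstab ^ 2 * ϱ ^ 2
        ≤ (1 + δ) * Cstab ^ 2 * (Cdrel ^ 2 * R ^ 2) :=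
          mul_le_mul_of_nonneg_left hϱR h1
      _ = (1 + δ) * C * R ^ 2 := by rw [hCdef]; ring
  have hηc2 : (1 + δ⁻¹) * ηc ^ 2 ≤ (1 + δ⁻¹) * qθ * ηb ^ 2 := by
    calc (1 + δ⁻¹) * ηc ^ 2 ≤ (1 + δ⁻¹) * (qθ * ηb ^ 2) :=
          mul_le_mul_of_nonneg_left hred (le_of_lt hδinv0)
      _ = (1 + δ⁻¹) * qθ * ηb ^ 2 := by ring
  have hchain : ηb ^ 2 ≤ K * R ^ 2 + (1 + δ⁻¹) * qθ * ηb ^ 2 := by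
    calc ηb ^ 2 = a ^ 2 + b ^ 2 := hsum
      _ ≤ R ^ 2 + ((1 + δ⁻¹) * ηc ^ 2 + (1 + δ) * Cstab ^ 2 * ϱ ^ 2) := by linarith
      _ ≤ R ^ 2 + ((1 + δ⁻¹) * qθ * ηb ^ 2 + (1 + δ) * C * R ^ 2) := by linarith
      _ = K * R ^ 2 + (1 + δ⁻¹) * qθ * ηb ^ 2 := by rw [hKdef]; ring
  have h2 : K * (θ * ηb ^ 2) ≤ K * R ^ 2 := by
    have e : K * (θ * ηb ^ 2) = ηb ^ 2 - (1 + δ⁻¹) * qθ * ηb ^ 2 := by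
      rw [show K * (θ * ηb ^ 2) = (θ * K) * ηb ^ 2 from by ring, hkey]; ring
    rw [e]; linarith
  exact le_of_mul_le_mul_left h2 hK0
end

section
/- Suppose nonnegative reals $\widetilde\eta_\bullet, \widetilde\eta_\circ, a, b, a', b', \varrho, R$ satisfy $\widetilde\eta_\bullet^2 = a^2 + b^2$, $\widetilde\eta_\circ^2 = a'^2 + b'^2$, stability $|a' - a| \le C_{\rm stab}\varrho$, reduction $b'^2 \le \rho_{\rm red} b^2 + C_{\rm red}\varrho^2$, and discrete reliability $\varrho^2 \le C_{\rm drel}^2 R^2$ with $R^2 \le \widetilde\eta_\bullet^2$, where $C_{\rm stab}, C_{\rm red}, C_{\rm drel} \ge 1$ and $\rho_{\rm red} \ge 0$. Then there exists a constant $C_{\rm mon} \ge 1$, depending only on $C_{\rm stab}$, $C_{\rm red}$, $\rho_{\rm red}$, and $C_{\rm drel}$, such that $\widetilde\eta_\circ^2 \le C_{\rm mon}\, \widetilde\eta_\bullet^2$. -/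
/-- Abstract quasi-monotonicity: stability, reduction (without `ρ_red < 1`), and
discrete reliability imply quasi-monotonicity of the error estimator. -/
theorem quasi_monotonicity
    (Cstab Cred Cdrel ρred : ℝ)
    (hCs : 1 ≤ Cstab) (hCr : 1 ≤ Cred) (hCd : 1 ≤ Cdrel) (hρ : 0 ≤ ρred) :
    ∃ Cmon : ℝ, 1 ≤ Cmon ∧
      ∀ ηb ηc a b a' b' ϱ R : ℝ,
        0 ≤ ηb → 0 ≤ ηc → 0 ≤ a → 0 ≤ b → 0 ≤ a' → 0 ≤ b' → 0 ≤ ϱ → 0 ≤ R →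
        ηb ^ 2 = a ^ 2 + b ^ 2 →
        ηc ^ 2 = a' ^ 2 + b' ^ 2 →
        |a' - a| ≤ Cstab * ϱ →
        b' ^ 2 ≤ ρred * b ^ 2 + Cred * ϱ ^ 2 →
        ϱ ^ 2 ≤ Cdrel ^ 2 * R ^ 2 →
        R ^ 2 ≤ ηb ^ 2 →
        ηc ^ 2 ≤ Cmon * ηb ^ 2 := by
  refine ⟨2 + ρred + (2 * Cstab ^ 2 + Cred) * Cdrel ^ 2, by nlinarith, ?_⟩
  intro ηb ηc a b a' b' ϱ R hηb hηc ha hb ha' hb' hϱ hR hb2 hc2 hstab hred hdrel hR2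
  have h1 : a' - a ≤ Cstab * ϱ := (abs_le.mp hstab).2
  have h0 : a' ≤ a + Cstab * ϱ := by linarith
  have h2 : a' ^ 2 ≤ 2 * a ^ 2 + 2 * Cstab ^ 2 * ϱ ^ 2 := by
    nlinarith [pow_le_pow_left₀ ha' h0 2, sq_nonneg (a - Cstab * ϱ)]
  have h3 : ϱ ^ 2 ≤ Cdrel ^ 2 * ηb ^ 2 := by nlinarith
  nlinarith [sq_nonneg b, sq_nonneg a, sq_nonneg Cstab, sq_nonneg Cdrel]
end

section
/- Let $w_{\min}, w_{\max} > 0$ with $w_{\min} \le w_{\max}$ and $p \in \mathbb{N}$. There exists a constant $C > 0$, depending only on $p$, $w_{\min}$, and $w_{\max}$, such that for all polynomials $q, \widetilde w$ of degree at most $p$ on $[0,1]$ with $w_{\min} \le \widetilde w(t) \le w_{\max}$ for all $t \in [0,1]$, the rational function $V = q/\widetilde w$ satisfies the inverse inequality $\|V'\|_{L^2(0,1)} \le C \|V\|_{L^2(0,1)}$. -/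
/-!
Polynomials of degree at most `p` form a finite-dimensional space on which the `L²(0,1)` norm is
a norm, so it dominates the supremum over `[0,1]` of `q` and of `q'`. Writing
`V' = (q' w - q w') / w²`, the bound `wmin ≤ w` together with these estimates for `q` and for `w`
bounds `|V'|` pointwise by a multiple of `‖q‖_{L²}`, and `|q| = w |V| ≤ wmax |V|` gives
`‖q‖_{L²} ≤ wmax ‖V‖_{L²}`.
-/

open MeasureTheory Polynomial Set

section IntervalL2

variable {f g : ℝ → ℝ} {a b c : ℝ}

theorem sqrt_integral_sq_le_of_abs_le (hab : a ≤ b) (h : ∀ t ∈ Icc a b, |f t| ≤ c) :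
    √(∫ t in a..b, f t ^ 2) ≤ √(b - a) * c := by
  have hc : 0 ≤ c := (abs_nonneg _).trans (h a ⟨le_rfl, hab⟩)
  have hint : ∫ t in a..b, f t ^ 2 ≤ c ^ 2 * (b - a) := by
    have hnorm := intervalIntegral.norm_integral_le_of_norm_le_const (f := fun t => f t ^ 2)
      (C := c ^ 2) fun t ht => by
        rw [uIoc_of_le hab] at ht
        simpa [sq_abs] using pow_le_pow_left₀ (abs_nonneg _) (h t (Ioc_subset_Icc_self ht)) 2
    rw [abs_of_nonneg (sub_nonneg.2 hab)] at hnorm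
    exact le_of_abs_le hnorm
  calc √(∫ t in a..b, f t ^ 2) ≤ √(c ^ 2 * (b - a)) := Real.sqrt_le_sqrt hint
    _ = √(b - a) * c := by rw [Real.sqrt_mul (sq_nonneg c), Real.sqrt_sq hc, mul_comm]

theorem sqrt_integral_sq_le_mul_of_abs_le_mul (hab : a ≤ b) (hc : 0 ≤ c)
    (hg : IntervalIntegrable (fun t => g t ^ 2) volume a b)
    (h : ∀ t ∈ Icc a b, |f t| ≤ c * |g t|) :
    √(∫ t in a..b, f t ^ 2) ≤ c * √(∫ t in a..b, g t ^ 2) := by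
  by_cases hf : IntervalIntegrable (fun t => f t ^ 2) volume a b
  · have hint : ∫ t in a..b, f t ^ 2 ≤ c ^ 2 * ∫ t in a..b, g t ^ 2 := by
      rw [← intervalIntegral.integral_const_mul]
      refine intervalIntegral.integral_mono_on hab hf (hg.const_mul _) fun t ht => ?_
      simpa [mul_pow, sq_abs] using pow_le_pow_left₀ (abs_nonneg _) (h t ht) 2
    calc √(∫ t in a..b, f t ^ 2) ≤ √(c ^ 2 * ∫ t in a..b, g t ^ 2) := Real.sqrt_le_sqrt hint
      _ = c * √(∫ t in a..b, g t ^ 2) := by rw [Real.sqrt_mul (sq_nonneg c), Real.sqrt_sq hc]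
  · rw [intervalIntegral.integral_undef hf, Real.sqrt_zero]
    positivity

theorem sqrt_integral_sq_le_mul_sqrt_integral_sq_div {M : ℝ} (hab : a ≤ b)
    (hf : ContinuousOn f (Icc a b)) (hg : ContinuousOn g (Icc a b))
    (hg_pos : ∀ t ∈ Icc a b, 0 < g t) (hg_le : ∀ t ∈ Icc a b, g t ≤ M) :
    √(∫ t in a..b, f t ^ 2) ≤ M * √(∫ t in a..b, (f t / g t) ^ 2) := by
  have hM : 0 ≤ M := (hg_pos a ⟨le_rfl, hab⟩).le.trans (hg_le a ⟨le_rfl, hab⟩)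
  refine sqrt_integral_sq_le_mul_of_abs_le_mul hab hM ?_ fun t ht => ?_
  · refine ContinuousOn.intervalIntegrable ?_
    rw [uIcc_of_le hab]
    exact (hf.div hg fun t ht => (hg_pos t ht).ne').pow 2
  · rw [abs_div, abs_of_pos (hg_pos t ht)]
    calc |f t| = g t * (|f t| / g t) := (mul_div_cancel₀ _ (hg_pos t ht).ne').symm
      _ ≤ M * (|f t| / g t) :=
        mul_le_mul_of_nonneg_right (hg_le t ht) (div_nonneg (abs_nonneg _) (hg_pos t ht).le)

end IntervalL2

theorem abs_deriv_div_le {f g : ℝ → ℝ} {f' g' m t : ℝ} (hf : HasDerivAt f f' t)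
    (hg : HasDerivAt g g' t) (hm : 0 < m) (hgt : m ≤ |g t|) :
    |deriv (fun s => f s / g s) t| ≤ (|f'| * |g t| + |f t| * |g'|) / m ^ 2 := by
  change |deriv (f / g) t| ≤ _
  rw [(hf.div hg (abs_pos.1 (hm.trans_le hgt))).deriv, abs_div, abs_pow]
  gcongr
  calc |f' * g t - f t * g'| ≤ |f' * g t| + |f t * g'| := abs_sub _ _
    _ = |f'| * |g t| + |f t| * |g'| := by rw [abs_mul, abs_mul]

namespace Polynomial

variable {a b : ℝ}

theorem eq_zero_of_integral_eval_sq_eq_zero (hab : a < b) {q : ℝ[X]}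
    (h : ∫ t in a..b, q.eval t ^ 2 = 0) : q = 0 := by
  have hae : (fun t => q.eval t ^ 2) =ᵐ[volume.restrict (Ioc a b)] 0 :=
    (intervalIntegral.integral_eq_zero_iff_of_le_of_nonneg_ae hab.le
      (.of_forall fun t => sq_nonneg _) ((q.continuous.pow 2).intervalIntegrable _ _)).1 h
  have hzero : EqOn (fun t => q.eval t ^ 2) 0 (Ioo a b) :=
    Measure.eqOn_open_of_ae_eq (ae_restrict_of_ae_restrict_of_subset Ioo_subset_Ioc_self hae)
      isOpen_Ioo (q.continuous.pow 2).continuousOn continuousOn_const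
  exact eq_zero_of_infinite_isRoot q <|
    (Ioo_infinite hab).mono fun t ht => (pow_eq_zero_iff two_ne_zero).1 (hzero ht)

@[reducible] noncomputable def l2InnerCoreDegreeLT (hab : a < b) (n : ℕ) :
    InnerProductSpace.Core ℝ (degreeLT ℝ n) where
  inner x y := ∫ t in a..b, (x : ℝ[X]).eval t * (y : ℝ[X]).eval t
  conj_inner_symm x y := intervalIntegral.integral_congr fun t _ => mul_comm _ _
  re_inner_nonneg x := intervalIntegral.integral_nonneg hab.le fun t _ => mul_self_nonneg _
  add_left x y z := by
    simp only [Submodule.coe_add, eval_add, add_mul]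
    exact intervalIntegral.integral_add
      ((x.1.continuous.mul z.1.continuous).intervalIntegrable _ _)
      ((y.1.continuous.mul z.1.continuous).intervalIntegrable _ _)
  smul_left x y r := by
    simp only [SetLike.val_smul, eval_smul, smul_eq_mul, mul_assoc, conj_trivial]
    exact intervalIntegral.integral_const_mul r _
  definite x hx :=
    Subtype.ext <| eq_zero_of_integral_eval_sq_eq_zero hab <| by simpa [sq] using hx

theorem exists_abs_eval_le_mul_sqrt_integral_sq (hab : a < b) (p : ℕ) (T : ℝ[X] →ₗ[ℝ] ℝ[X]) :
    ∃ C > 0, ∀ q : ℝ[X], q.natDegree ≤ p → ∀ t ∈ Icc a b,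
      |(T q).eval t| ≤ C * √(∫ s in a..b, q.eval s ^ 2) := by
  let core := l2InnerCoreDegreeLT hab (p + 1)
  let _ : NormedAddCommGroup (degreeLT ℝ (p + 1)) := core.toNormedAddCommGroup
  let _ : InnerProductSpace ℝ (degreeLT ℝ (p + 1)) := .ofCore core.toCore
  let S : degreeLT ℝ (p + 1) →ₗ[ℝ] C(Icc a b, ℝ) :=
    (toContinuousMapOnAlgHom (Icc a b)).toLinearMap ∘ₗ T ∘ₗ (degreeLT ℝ (p + 1)).subtype
  obtain ⟨C, hC, hS⟩ := (LinearMap.toContinuousLinearMap S).bound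
  refine ⟨C, hC, fun q hq t ht => ?_⟩
  have hmem : q ∈ degreeLT ℝ (p + 1) :=
    mem_degreeLT.2 (degree_le_natDegree.trans_lt (WithBot.coe_lt_coe.2 (Nat.lt_succ_of_le hq)))
  calc |(T q).eval t| = ‖S ⟨q, hmem⟩ ⟨t, ht⟩‖ := rfl
    _ ≤ ‖S ⟨q, hmem⟩‖ := (S ⟨q, hmem⟩).norm_coe_le_norm _
    _ ≤ C * ‖(⟨q, hmem⟩ : degreeLT ℝ (p + 1))‖ := hS _
    _ = C * √(∫ s in a..b, q.eval s ^ 2) := by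
      simp only [sq]
      rfl

end Polynomial

/-- Inverse inequality for rational functions on the reference interval: for
polynomials `q, w` of degree at most `p` with `wmin ≤ w ≤ wmax` on `[0,1]`, the
rational function `V = q/w` satisfies `‖V'‖_{L²(0,1)} ≤ C ‖V‖_{L²(0,1)}` with a
constant depending only on `p`, `wmin`, `wmax`. -/
theorem inverse_inequality_rational
    (p : ℕ) (wmin wmax : ℝ) (hmin : 0 < wmin) (hle : wmin ≤ wmax) :
    ∃ C > (0 : ℝ), ∀ q w : Polynomial ℝ,
      q.natDegree ≤ p → w.natDegree ≤ p →
      (∀ t ∈ Set.Icc (0 : ℝ) 1, wmin ≤ w.eval t ∧ w.eval t ≤ wmax) →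
      Real.sqrt (∫ t in (0 : ℝ)..1, (deriv (fun s : ℝ => q.eval s / w.eval s) t) ^ 2)
        ≤ C * Real.sqrt (∫ t in (0 : ℝ)..1, (q.eval t / w.eval t) ^ 2) := by
  obtain ⟨C₀, hC₀, heval⟩ := exists_abs_eval_le_mul_sqrt_integral_sq zero_lt_one p LinearMap.id
  obtain ⟨C₁, hC₁, hderiv⟩ := exists_abs_eval_le_mul_sqrt_integral_sq zero_lt_one p derivative
  have hwmax : 0 < wmax := hmin.trans_le hle
  refine ⟨C₁ * (1 + C₀) * wmax ^ 2 / wmin ^ 2, by positivity, fun q w hq hw hbound => ?_⟩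
  have hw_pos : ∀ t ∈ Icc (0 : ℝ) 1, 0 < w.eval t := fun t ht => hmin.trans_le (hbound t ht).1
  have hw_abs : ∀ t ∈ Icc (0 : ℝ) 1, |w.eval t| ≤ wmax := fun t ht =>
    (abs_of_pos (hw_pos t ht)).trans_le (hbound t ht).2
  set L := √(∫ t in (0 : ℝ)..1, (q.eval t / w.eval t) ^ 2)
  have hLq : √(∫ t in (0 : ℝ)..1, q.eval t ^ 2) ≤ wmax * L :=
    sqrt_integral_sq_le_mul_sqrt_integral_sq_div zero_le_one q.continuousOn w.continuousOn
      hw_pos fun t ht => (hbound t ht).2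
  have hLw : √(∫ t in (0 : ℝ)..1, w.eval t ^ 2) ≤ wmax := by
    simpa using sqrt_integral_sq_le_of_abs_le zero_le_one hw_abs
  suffices hpt : ∀ t ∈ Icc (0 : ℝ) 1, |deriv (fun s => q.eval s / w.eval s) t|
      ≤ C₁ * (1 + C₀) * wmax ^ 2 / wmin ^ 2 * L by
    simpa using sqrt_integral_sq_le_of_abs_le zero_le_one hpt
  intro t ht
  calc |deriv (fun s => q.eval s / w.eval s) t|
      ≤ (|(derivative q).eval t| * |w.eval t| + |q.eval t| * |(derivative w).eval t|) / wmin ^ 2 :=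
        abs_deriv_div_le (q.hasDerivAt t) (w.hasDerivAt t) hmin
          ((hbound t ht).1.trans (le_abs_self _))
    _ ≤ (C₁ * (wmax * L) * wmax + C₀ * (wmax * L) * (C₁ * wmax)) / wmin ^ 2 := by
        gcongr
        · exact (hderiv q hq t ht).trans (by gcongr)
        · exact hw_abs t ht
        · exact (heval q hq t ht).trans (by gcongr)
        · exact (hderiv w hw t ht).trans (by gcongr)
    _ = C₁ * (1 + C₀) * wmax ^ 2 / wmin ^ 2 * L := by ring
end

section
/- Let $C_{\rm stab} \ge 1$, $0 \le \rho_{\rm red} < 1$, $C_{\rm red} > 0$, and $0 < \widetilde\theta \le 1$. Suppose nonnegative reals satisfy: $\widetilde\eta_{\ell+1}^2 = a'^2 + b'^2$, $\widetilde\eta_\ell^2 = a^2 + b^2$ with $|a'-a| \le C_{\rm stab}\varrho$, $b'^2 \le \rho_{\rm red} b^2 + C_{\rm red}\varrho^2$, and the Dörfler property $\widetilde\theta\,\widetilde\eta_\ell^2 \le b^2$. Then for every $\delta > 0$: $\widetilde\eta_{\ell+1}^2 \le (1+\delta)\big(1 - (1-\rho_{\rm red})\widetilde\theta\big)\widetilde\eta_\ell^2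 + \big(C_{\rm red} + (1+\delta^{-1})C_{\rm stab}^2\big)\varrho^2$. -/
/-- Abstract estimator reduction: stability on unrefined patches, reduction on
refined patches, and the Dörfler property yield contraction up to a
perturbation, via the Young inequality. -/
theorem abstract_estimator_reduction
    (Cstab ρred Cred θ : ℝ)
    (hCs : 1 ≤ Cstab) (hρ0 : 0 ≤ ρred) (hρ1 : ρred < 1) (hCr : 0 < Cred)
    (hθ0 : 0 < θ) (hθ1 : θ ≤ 1)
    (ηl ηl1 a b a' b' ϱ : ℝ)
    (ha : 0 ≤ a) (hb : 0 ≤ b) (ha' : 0 ≤ a') (hb' : 0 ≤ b')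
    (hηl : 0 ≤ ηl) (hηl1 : 0 ≤ ηl1) (hϱ : 0 ≤ ϱ)
    (hsplit1 : ηl1 ^ 2 = a' ^ 2 + b' ^ 2)
    (hsplit : ηl ^ 2 = a ^ 2 + b ^ 2)
    (hstab : |a' - a| ≤ Cstab * ϱ)
    (hred : b' ^ 2 ≤ ρred * b ^ 2 + Cred * ϱ ^ 2)
    (hdoerfler : θ * ηl ^ 2 ≤ b ^ 2) :
    ∀ δ : ℝ, 0 < δ →
      ηl1 ^ 2 ≤ (1 + δ) * (1 - (1 - ρred) * θ) * ηl ^ 2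
        + (Cred + (1 + δ⁻¹) * Cstab ^ 2) * ϱ ^ 2 := by
  intro δ hδ
  rw [abs_le] at hstab
  obtain ⟨h1, h2⟩ := hstab
  have hδ' : δ⁻¹ > 0 := inv_pos.mpr hδ
  set c := Cstab * ϱ with hc
  have hc0 : 0 ≤ c := mul_nonneg (le_trans zero_le_one hCs) hϱ
  have key : 0 ≤ δ * a ^ 2 + δ⁻¹ * c ^ 2 - 2 * a * c := by
    have h2 : δ * (δ * a ^ 2 + δ⁻¹ * c ^ 2 - 2 * a * c) = (δ * a - c) ^ 2 := by
      field_simp; ring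
    nlinarith [sq_nonneg (δ * a - c)]
  have hsq : a' ^ 2 ≤ (a + c) ^ 2 := by nlinarith
  have young : a' ^ 2 ≤ (1 + δ) * a ^ 2 + (1 + δ⁻¹) * c ^ 2 := by nlinarith
  have hb2 : (1 - ρred) * θ * ηl ^ 2 ≤ (1 - ρred) * b ^ 2 := by
    rw [mul_assoc]
    exact mul_le_mul_of_nonneg_left hdoerfler (by linarith)
  have h3 : (1 + δ) * ((1 - ρred) * θ * ηl ^ 2) ≤ (1 + δ) * ((1 - ρred) * b ^ 2) :=
    mul_le_mul_of_nonneg_left hb2 (by linarith)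
  have hcexp : c ^ 2 = Cstab ^ 2 * ϱ ^ 2 := by rw [hc]; ring
  have h4 : 0 ≤ δ * (ρred * b ^ 2) :=
    mul_nonneg hδ.le (mul_nonneg hρ0 (sq_nonneg b))
  rw [hcexp] at young
  have h5 : δ * ηl ^ 2 = δ * a ^ 2 + δ * b ^ 2 := by rw [hsplit]; ring
  linarith [h3, h4, h5]
end

section
/- Let $(a_k)_{k\in\mathbb{N}_0}$ be an increasing sequence of natural numbers with $a_0 \ge 1$ and suppose $a_{k+1} \le C_{\rm son}\, a_k$ for all $k$ with a constant $C_{\rm son} \ge 1$. Let $s > 0$ and suppose $\sup_{\ell\in\mathbb{N}_0}(a_\ell - a_0 + 1)^s \eta_\ell \le M$ for a sequence $(\eta_\ell)$ of nonnegative reals. Then there exists a constant $C > 0$, depending only on $C_{\rm son}$, $a_0$, and $s$, such that for every $N \in \mathbb{N}_0$: $\inf\{\eta_\ell : a_\ell - a_0 \le N,\ \ell \in \mathbb{N}_0\} \le C\, M\, (N+1)^{-s}$. -/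
/-- Lower-bound step in the proof of rate optimality: the son estimate
`a_{k+1} ≤ C_son a_k` implies that the rate achieved along the adaptive
sequence bounds the approximability from below, up to a constant depending only
on `C_son`, `a 0` and `s`. -/
theorem son_estimate_lower_bound
    (a : ℕ → ℕ) (hmono : StrictMono a) (ha0 : 1 ≤ a 0)
    (Cson : ℝ) (hCson : 1 ≤ Cson)
    (hson : ∀ k : ℕ, (a (k + 1) : ℝ) ≤ Cson * a k)
    (s : ℝ) (hs : 0 < s)
    (η : ℕ → ℝ) (hη : ∀ ℓ, 0 ≤ η ℓ)
    (M : ℝ) (hM : ∀ ℓ : ℕ, ((a ℓ : ℝ) - a 0 + 1) ^ s * η ℓ ≤ M) :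
    ∃ C > (0 : ℝ), ∀ Nn : ℕ,
      sInf (η '' {ℓ : ℕ | (a ℓ : ℝ) - a 0 ≤ Nn})
        ≤ C * M * ((Nn : ℝ) + 1) ^ (-s) := by
  have hA : (1:ℝ) ≤ (a 0 : ℝ) := by exact_mod_cast ha0
  have hCA : (0:ℝ) < Cson * a 0 := by positivity
  have hM0 : 0 ≤ M := by
    have h := hM 0
    have h1 : ((a 0 : ℝ) - a 0 + 1) = 1 := by ring
    rw [h1, Real.one_rpow, one_mul] at h
    exact le_trans (hη 0) h
  refine ⟨(Cson * a 0) ^ s, Real.rpow_pos_of_pos hCA s, ?_⟩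
  intro N
  have hadd : ∀ n, a 0 + n ≤ a n := by
    intro n
    induction n with
    | zero => simp
    | succ n ih =>
        have h2 : a n < a (n + 1) := hmono (by omega)
        omega
  set L := Nat.findGreatest (fun ℓ => a ℓ ≤ a 0 + N) N with hLdef
  have hPL : a L ≤ a 0 + N :=
    Nat.findGreatest_spec (P := fun ℓ => a ℓ ≤ a 0 + N) (Nat.zero_le N) (Nat.le_add_right _ _)
  have hnot : a 0 + N < a (L + 1) := by
    by_cases h : L + 1 ≤ N
    · have := Nat.findGreatest_is_greatest (P := fun ℓ => a ℓ ≤ a 0 + N)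
        (Nat.lt_succ_self L) h
      have h3 : ¬ a (L + 1) ≤ a 0 + N := by simpa using this
      omega
    · have := hadd (L + 1)
      omega
  -- real-number bounds
  set x : ℝ := (a L : ℝ) - a 0 + 1 with hxdef
  have haL : (a 0 : ℝ) ≤ (a L : ℝ) := by
    have := hadd L; exact_mod_cast le_trans (Nat.le_add_right _ _) this
  have hx1 : (1:ℝ) ≤ x := by simp only [hxdef]; linarith
  have hxpos : (0:ℝ) < x := lt_of_lt_of_le one_pos hx1
  have hsonL := hson L
  have hnotR : (a 0 : ℝ) + N < (a (L+1) : ℝ) := by exact_mod_cast hnot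
  have hkey : (N:ℝ) + 1 ≤ x * (Cson * a 0) := by
    have hmn : (0:ℝ) ≤ Cson * ((a 0 : ℝ) - 1) * ((a L : ℝ) - a 0) := by
      have h0 : (0:ℝ) ≤ Cson := le_trans zero_le_one hCson
      exact mul_nonneg (mul_nonneg h0 (by linarith)) (by linarith)
    nlinarith
  have hNpos : (0:ℝ) < (N:ℝ) + 1 := by positivity
  -- the member of the set
  have hmem : η L ∈ η '' {ℓ : ℕ | (a ℓ : ℝ) - a 0 ≤ N} := by
    refine ⟨L, ?_, rfl⟩
    have : (a L : ℝ) ≤ (a 0 : ℝ) + N := by exact_mod_cast hPL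
    simpa using by linarith
  have hbdd : BddBelow (η '' {ℓ : ℕ | (a ℓ : ℝ) - a 0 ≤ N}) := by
    refine ⟨0, ?_⟩
    rintro y ⟨ℓ, -, rfl⟩
    exact hη ℓ
  refine le_trans (csInf_le hbdd hmem) ?_
  -- now show η L ≤ (Cson * a 0)^s * M * (N+1)^(-s)
  have hxs : (0:ℝ) < x ^ s := Real.rpow_pos_of_pos hxpos s
  have hNs : (0:ℝ) < ((N:ℝ) + 1) ^ s := Real.rpow_pos_of_pos hNpos s
  have hpow : ((N:ℝ) + 1) ^ s ≤ x ^ s * (Cson * a 0) ^ s := by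
    rw [← Real.mul_rpow hxpos.le hCA.le]
    exact Real.rpow_le_rpow hNpos.le hkey hs.le
  have hηL : η L ≤ M / x ^ s := by
    rw [le_div_iff₀ hxs]
    have := hM L
    linarith [this, mul_comm (x ^ s) (η L)]
  refine le_trans hηL ?_
  rw [Real.rpow_neg hNpos.le, mul_comm ((Cson * a 0) ^ s * M), ← div_eq_inv_mul,
    div_le_div_iff₀ hxs hNs]
  calc M * (((N:ℝ) + 1) ^ s) ≤ M * (x ^ s * (Cson * a 0) ^ s) :=
        mul_le_mul_of_nonneg_left hpow hM0
    _ = (Cson * a 0) ^ s * M * x ^ s := by ring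
end
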